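/- For every even q ≥ 2 and every g ≥ 0, the graph G_q(g) has at least one perfect matching. -/

import Mathlib

/-- Edge corona product `G ⊛ K_q`: keep `G`, and for each edge of `G` add a fresh
copy of the complete graph on `q` vertices, joining all its vertices to both
endpoints of the edge. -/
def edgeCorona {V : Type} (G : SimpleGraph V) (q : ℕ) :
    SimpleGraph (V ⊕ (G.edgeSet × Fin q)) where
  Adj := fun x y => match x, y with
    | Sum.inl u, Sum.inl v => G.Adj u v
    | Sum.inl u, Sum.inr p => u ∈ (p.1 : Sym2 V)
    | Sum.inr p, Sum.inl v => v ∈ (p.1 : Sym2 V)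
    | Sum.inr p, Sum.inr r => p.1 = r.1 ∧ p.2 ≠ r.2
  symm := ⟨by
    rintro (u | p) (v | r) h
    · exact G.adj_symm h
    · exact h
    · exact h
    · exact ⟨h.1.symm, h.2.symm⟩⟩
  loopless := ⟨by
    rintro (u | p) h
    · exact G.irrefl h
    · exact h.2 rfl⟩

/-- The simplicial network `G_q(g)` together with its vertex type:
`G_q(0) = K_{q+2}` and `G_q(g+1) = G_q(g) ⊛ K_q`. -/
def Gaux (q : ℕ) : ℕ → Σ V : Type, SimpleGraph V
  | 0 => ⟨Fin (q + 2), ⊤⟩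
  | g + 1 => ⟨_, edgeCorona (Gaux q g).2 q⟩

abbrev GVert (q g : ℕ) : Type := (Gaux q g).1

abbrev Gnet (q g : ℕ) : SimpleGraph (GVert q g) := (Gaux q g).2

/-- The `q+2` hub nodes of `G_q(g)`: the vertices present from iteration `0`. -/
def hub (q : ℕ) : (g : ℕ) → Fin (q + 2) → GVert q g
  | 0 => id
  | g + 1 => fun k => Sum.inl (hub q g k)

/-!
A perfect matching is the same thing as a fixed-point-free involution moving every vertex to a
neighbour. `K_{q+2}` has one because `q + 2` is even, and an involution of `G` extends to
`G ⊛ K_q` by letting it act on the old vertices and pairing up the `q` vertices of each new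
clique among themselves, which is possible because `q` is even.
-/

namespace SimpleGraph

variable {V : Type*} {G : SimpleGraph V}

theorem exists_isPerfectMatching_iff_exists_involutive :
    (∃ M : G.Subgraph, M.IsPerfectMatching) ↔
      ∃ f : V → V, Function.Involutive f ∧ ∀ v, G.Adj v (f v) := by
  constructor
  · rintro ⟨M, hM⟩
    choose f hf hf_unique using Subgraph.isPerfectMatching_iff.mp hM
    exact ⟨f, fun v => (hf_unique (f v) v (hf v).symm).symm, fun v => (hf v).adj_sub⟩
  · rintro ⟨f, hf, hadj⟩
    refine ⟨⟨Set.univ, fun v w => f v = w, ?_, fun _ => trivial, ?_⟩, ?_⟩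
    · rintro v w rfl
      exact hadj v
    · exact ⟨by rintro v w rfl; exact hf v⟩
    · rw [Subgraph.isPerfectMatching_iff]
      exact fun v => ⟨f v, rfl, fun w (hw : f v = w) => hw.symm⟩

theorem exists_isPerfectMatching_top_of_even_card [Finite V] (h : Even (Nat.card V)) :
    ∃ M : (⊤ : SimpleGraph V).Subgraph, M.IsPerfectMatching := by
  have hclique : (⊤ : SimpleGraph V).IsClique Set.univ := fun _ _ _ _ => id
  obtain ⟨M, hverts, hM⟩ := (hclique.even_iff_exists_isMatching Set.finite_univ).mp
    (by rwa [Set.ncard_univ])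
  exact ⟨M, hM, Subgraph.isSpanning_iff.mpr hverts⟩

end SimpleGraph

open SimpleGraph

theorem exists_involutive_ne_of_even_card {α : Type*} [Finite α] (h : Even (Nat.card α)) :
    ∃ σ : α → α, Function.Involutive σ ∧ ∀ a, σ a ≠ a := by
  obtain ⟨σ, hσ, hne⟩ :=
    exists_isPerfectMatching_iff_exists_involutive.mp (exists_isPerfectMatching_top_of_even_card h)
  exact ⟨σ, hσ, fun a => (hne a).ne'⟩

theorem edgeCorona_exists_isPerfectMatching {V : Type} {G : SimpleGraph V} {q : ℕ}
    (hq : Even q) (hG : ∃ M : G.Subgraph, M.IsPerfectMatching) :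
    ∃ M : (edgeCorona G q).Subgraph, M.IsPerfectMatching := by
  obtain ⟨f, hf, hadj⟩ := exists_isPerfectMatching_iff_exists_involutive.mp hG
  obtain ⟨σ, hσ, hne⟩ := exists_involutive_ne_of_even_card (α := Fin q) (by simpa using hq)
  refine exists_isPerfectMatching_iff_exists_involutive.mpr
    ⟨Sum.map f (Prod.map id σ), ?_, ?_⟩
  · rintro (v | ⟨e, i⟩)
    · simp [hf v]
    · simp [hσ i]
  · rintro (v | ⟨e, i⟩)
    · exact hadj v
    · exact ⟨rfl, (hne i).symm⟩

theorem exists_perfectMatching_general (q g : ℕ) (hq : Even q) :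
    ∃ M : (Gnet q g).Subgraph, M.IsPerfectMatching := by
  induction g with
  | zero =>
    exact exists_isPerfectMatching_top_of_even_card (V := Fin (q + 2))
      (by simpa using hq.add even_two)
  | succ g ih => exact edgeCorona_exists_isPerfectMatching hq ih

/-- For every even `q ≥ 2` and every `g ≥ 0`, `G_q(g)` has a perfect matching. -/
theorem exists_perfectMatching (q g : ℕ) (hq : Even q) (hq2 : 2 ≤ q) :
    ∃ M : (Gnet q g).Subgraph, M.IsPerfectMatching :=
  exists_perfectMatching_general q g hq
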